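/- The characteristic polynomial of the distance matrix D of the complete k-partite graph K_{n_1,...,n_k} on n = n_1 + ... + n_k vertices equals (λ+2)^{n-k} [ ∏_{i=1}^k (λ - n_i + 2) - Σ_{i=1}^k n_i ∏_{j≠i} (λ - n_j + 2) ]. -/

import Mathlib

/-!
With `P` the vertex–part incidence matrix and `J` the all-ones matrix, `D + 2I = P (I + J) Pᵀ`.
Since `AB` and `BA` have the same characteristic polynomial up to a power of `X`, and
`Pᵀ P = diag(nᵢ)`, the characteristic polynomial of `D + 2I` is `X ^ (n - k)` times that of
`(I + J) diag(nᵢ) = diag(nᵢ) + 1 nᵀ`. Shifting back by `2`, it remains to compute the determinant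
of a diagonal matrix plus a rank-one matrix, which is the matrix determinant lemma.
-/

open Polynomial Finset

/-- The distance matrix of the complete multipartite graph `K_{n₁,…,n_k}`:
distance 0 on the diagonal, 2 between distinct vertices of the same part,
1 between vertices of different parts. -/
noncomputable def distMatrixCM {k : ℕ} (n : Fin k → ℕ) :
    Matrix (Σ i, Fin (n i)) (Σ i, Fin (n i)) ℝ :=
  Matrix.of fun u v => if u = v then 0 else if u.1 = v.1 then 2 else 1

open Matrix

namespace Matrix

variable {ι : Type*} [Fintype ι] [DecidableEq ι]

theorem det_diagonal_sub_vecMulVec_of_field {K : Type*} [Field K] {d : ι → K}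
    (hd : ∀ i, d i ≠ 0) (u v : ι → K) :
    (diagonal d - vecMulVec u v).det = ∏ i, d i - ∑ i, u i * v i * ∏ j ∈ univ.erase i, d j := by
  have hfactor : diagonal d - vecMulVec u v = diagonal d * (1 - vecMulVec (u / d) v) := by
    refine Matrix.ext fun i j => ?_
    simp only [sub_apply, diagonal_apply, vecMulVec_apply, diagonal_mul, one_apply, Pi.div_apply,
      mul_sub, mul_ite, mul_one, mul_zero, sub_right_inj]
    field_simp [hd i]
  rw [hfactor, det_mul, det_diagonal, sub_eq_add_neg, ← neg_vecMulVec, vecMulVec_eq Unit,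
    det_one_add_replicateCol_mul_replicateRow, mul_add, mul_one, dotProduct, mul_sum,
    sub_eq_add_neg, ← sum_neg_distrib]
  congr 1
  refine sum_congr rfl fun i _ => ?_
  rw [← mul_prod_erase univ d (mem_univ i)]
  simp only [Pi.neg_apply, Pi.div_apply]
  field_simp [hd i]

theorem det_diagonal_sub_vecMulVec {R : Type*} [CommRing R] [IsDomain R] {d : ι → R}
    (hd : ∀ i, d i ≠ 0) (u v : ι → R) :
    (diagonal d - vecMulVec u v).det = ∏ i, d i - ∑ i, u i * v i * ∏ j ∈ univ.erase i, d j := by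
  let f := algebraMap R (FractionRing R)
  have hf : Function.Injective f := IsFractionRing.injective R (FractionRing R)
  have hmap : f.mapMatrix (diagonal d - vecMulVec u v) =
      diagonal (f ∘ d) - vecMulVec (f ∘ u) (f ∘ v) := by
    refine Matrix.ext fun i j => ?_
    by_cases h : i = j <;> simp [h, vecMulVec_apply]
  apply hf
  rw [RingHom.map_det, hmap,
    det_diagonal_sub_vecMulVec_of_field (d := f ∘ d) fun i => (map_ne_zero_iff f hf).2 (hd i)]
  simp [map_sub, map_prod, map_sum]

theorem charpoly_diagonal_add_vecMulVec {R : Type*} [CommRing R] [IsDomain R] (e u v : ι → R) :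
    (diagonal e + vecMulVec u v).charpoly =
      ∏ i, (X - C (e i)) - ∑ i, C (u i * v i) * ∏ j ∈ univ.erase i, (X - C (e j)) := by
  have hchar : charmatrix (diagonal e + vecMulVec u v) =
      diagonal (fun i => X - C (e i)) - vecMulVec (C ∘ u) (C ∘ v) := by
    refine Matrix.ext fun i j => ?_
    by_cases h : i = j <;> simp [h, vecMulVec_apply, sub_add_eq_sub_sub]
  rw [charpoly, hchar, det_diagonal_sub_vecMulVec fun i => X_sub_C_ne_zero (e i)]
  simp

theorem charpoly_submatrix_of_card_le {V R : Type*} [Fintype V] [DecidableEq V] [CommRing R]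
    (p : V → ι) (M : Matrix ι ι R) (h : Fintype.card ι ≤ Fintype.card V) :
    (M.submatrix p p).charpoly =
      X ^ (Fintype.card V - Fintype.card ι) *
        (M * diagonal fun i => (#{v | p v = i} : R)).charpoly := by
  set P : Matrix V ι R := (1 : Matrix ι ι R).submatrix p id
  have hsub : M.submatrix p p = P * (M * Pᵀ) := by
    refine Matrix.ext fun u v => ?_
    simp [P, mul_apply, one_apply]
  have hgram : Pᵀ * P = diagonal fun i => (#{v | p v = i} : R) := by
    refine Matrix.ext fun i j => ?_
    rcases eq_or_ne i j with rfl | hij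
    · simp +contextual [P, mul_apply, one_apply, eq_comm (a := i)]
    · simp +contextual [P, mul_apply, one_apply, hij]
  rw [hsub, charpoly_mul_comm_of_le _ _ h, Matrix.mul_assoc, hgram]

end Matrix

theorem card_filter_sigma_fst_eq {ι : Type*} [Fintype ι] [DecidableEq ι] (α : ι → Type*)
    [∀ i, Fintype (α i)] (i : ι) :
    #{v : Σ i, α i | v.1 = i} = Fintype.card (α i) := by
  rw [card_filter, ← univ_sigma_univ, sum_sigma]
  simp [apply_ite Finset.card]

def multipartiteDistMatrix (R : Type*) [CommRing R] {V ι : Type*} [DecidableEq V]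
    [DecidableEq ι] (p : V → ι) : Matrix V V R :=
  of fun u v => if u = v then 0 else if p u = p v then 2 else 1

section

variable {V ι R : Type*} [DecidableEq V] [DecidableEq ι] [CommRing R]

theorem multipartiteDistMatrix_eq [Fintype V] (p : V → ι) :
    multipartiteDistMatrix R p =
      (1 + vecMulVec 1 1 : Matrix ι ι R).submatrix p p - scalar V 2 := by
  refine Matrix.ext fun u v => ?_
  rcases eq_or_ne u v with rfl | huv
  · norm_num [multipartiteDistMatrix]
  · by_cases hp : p u = p v <;>
      norm_num [multipartiteDistMatrix, huv, hp, one_apply, one_add_one_eq_two]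

theorem one_add_vecMulVec_mul_diagonal_sub_scalar [Fintype ι] (c : ι → R) :
    (1 + vecMulVec 1 1) * diagonal c - scalar ι 2 = diagonal (c - 2) + vecMulVec 1 c := by
  have hc : (1 : ι → R) ᵥ* diagonal c = c := funext fun i => by simp [vecMul_diagonal]
  rw [Matrix.add_mul, Matrix.one_mul, vecMulVec_mul, hc, scalar_apply, add_sub_right_comm,
    diagonal_sub]
  rfl

theorem charpoly_multipartiteDistMatrix [Fintype V] [Fintype ι] [IsDomain R] (p : V → ι)
    (h : Fintype.card ι ≤ Fintype.card V) :
    (multipartiteDistMatrix R p).charpoly =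
      (X + C 2) ^ (Fintype.card V - Fintype.card ι) *
        (∏ i, (X - C ((#{v | p v = i} : R) - 2)) -
          ∑ i, C (#{v | p v = i} : R) *
            ∏ j ∈ univ.erase i, (X - C ((#{v | p v = j} : R) - 2))) := by
  rw [multipartiteDistMatrix_eq, charpoly_sub_scalar, charpoly_submatrix_of_card_le p _ h,
    mul_comp, pow_comp, X_comp, ← charpoly_sub_scalar, one_add_vecMulVec_mul_diagonal_sub_scalar,
    charpoly_diagonal_add_vecMulVec]
  simp

end

/-- The characteristic polynomial of the distance matrix of `K_{n₁,…,n_k}` equals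
`(λ+2)^{n-k} [∏ (λ - nᵢ + 2) - Σ nᵢ ∏_{j≠i} (λ - nⱼ + 2)]`. -/
theorem charpoly_distMatrix_completeMultipartite (k : ℕ) (n : Fin k → ℕ)
    (hn : ∀ i, 0 < n i) :
    (distMatrixCM n).charpoly =
      (X + C 2) ^ ((∑ i, n i) - k) *
        (∏ i, (X - C ((n i : ℝ) - 2)) -
          ∑ i, C ((n i : ℝ)) * ∏ j ∈ univ.erase i, (X - C ((n j : ℝ) - 2))) := by
  have hk : Fintype.card (Fin k) ≤ Fintype.card (Σ i, Fin (n i)) := by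
    simpa using sum_le_sum fun i (_ : i ∈ univ) => Nat.one_le_iff_ne_zero.2 (hn i).ne'
  have h := charpoly_multipartiteDistMatrix (R := ℝ) Sigma.fst hk
  rw [show distMatrixCM n = multipartiteDistMatrix ℝ Sigma.fst from rfl]
  simpa [card_filter_sigma_fst_eq] using h
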